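/- For every matrix A ∈ 𝕊^{d×n}, the open tropical cones of A and of its signed resolution coincide: sep(A) = sep(ξ(A)). -/

import Mathlib

/-!  Signed tropical numbers 𝕋±, the symmetrized tropical semiring 𝕊,
     and signed tropical convexity (Loho–Végh). -/

inductive SSign : Type where
  | pos : SSign
  | neg : SSign
  | bal : SSign
deriving DecidableEq

/-- The symmetrized tropical semiring 𝕊: the tropical zero 𝟘 = -∞ together with
elements `elem s r` where `s` is a sign (⊕, ⊖ or •) and `r` a real number. -/
inductive STrop : Type where
  | zero : STrop
  | elem : SSign → ℝ → STrop

namespace STrop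

/-- membership in the signed tropical numbers 𝕋± (i.e. not balanced-nonzero). -/
def isSigned : STrop → Prop
  | elem SSign.bal _ => False
  | _ => True

/-- membership in 𝕋≥, the nonnegative tropical numbers. -/
def nneg : STrop → Prop
  | zero => True
  | elem SSign.pos _ => True
  | _ => False

/-- membership in 𝕋≤, the nonpositive tropical numbers. -/
def npos : STrop → Prop
  | zero => True
  | elem SSign.neg _ => True
  | _ => False

/-- strictly positive signed element (sign ⊕, not 𝟘). -/
def isPos : STrop → Prop
  | elem SSign.pos _ => True
  | _ => False

/-- balanced or 𝟘 (membership in 𝕋•). -/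
def balZero : STrop → Prop
  | zero => True
  | elem SSign.bal _ => True
  | _ => False

/-- the negation map ⊖. -/
def neg : STrop → STrop
  | zero => zero
  | elem SSign.pos r => elem SSign.neg r
  | elem SSign.neg r => elem SSign.pos r
  | elem SSign.bal r => elem SSign.bal r

/-- tropical addition ⊕ on 𝕊. -/
noncomputable def add : STrop → STrop → STrop
  | zero, y => y
  | x, zero => x
  | elem s r, elem t u =>
    if r < u then elem t u
    else if u < r then elem s r
    else if s = t then elem s r
    else elem SSign.bal r

def signMul : SSign → SSign → SSign
  | SSign.pos, t => t
  | SSign.neg, SSign.pos => SSign.neg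
  | SSign.neg, SSign.neg => SSign.pos
  | SSign.neg, SSign.bal => SSign.bal
  | SSign.bal, _ => SSign.bal

/-- tropical multiplication ⊙ on 𝕊. -/
def mul : STrop → STrop → STrop
  | zero, _ => zero
  | _, zero => zero
  | elem s r, elem t u => elem (signMul s t) (r + u)

/-- a ⊖ b := a ⊕ (⊖b). -/
noncomputable def sub (x y : STrop) : STrop := add x (neg y)

/-- the tropical one, the signed element ⊕0. -/
def one : STrop := elem SSign.pos 0

/-- the absolute value |·| : 𝕊 → 𝕋≥. -/
def absS : STrop → STrop
  | zero => zero
  | elem _ r => elem SSign.pos r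

/-- strict order: x > y iff x ⊖ y is a strictly positive signed element. -/
def sgt (x y : STrop) : Prop := isPos (sub x y)

/-- balance relation: x ⋈ y iff x ⊖ y is balanced or 𝟘. -/
def bal (x y : STrop) : Prop := balZero (sub x y)

/-- the relation ⊵ : x ⊵ y iff x > y or x ⋈ y. -/
def teq (x y : STrop) : Prop := sgt x y ∨ bal x y

/-- the total order ≤ on the signed tropical numbers 𝕋±
(arbitrarily `False` whenever a balanced element is involved). -/
def sle : STrop → STrop → Prop
  | zero, zero => True
  | zero, elem SSign.pos _ => True
  | elem SSign.neg _, zero => True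
  | elem SSign.neg _, elem SSign.pos _ => True
  | elem SSign.pos r, elem SSign.pos u => r ≤ u
  | elem SSign.neg r, elem SSign.neg u => u ≤ r
  | _, _ => False

/-- U(a): the set of signed numbers incomparable with a; the singleton {a}
for signed a, and the order interval [⊖|a|, |a|] for balanced a. -/
def U : STrop → Set STrop
  | elem SSign.bal r => {x | isSigned x ∧ sle (elem SSign.neg r) x ∧ sle x (elem SSign.pos r)}
  | a => {a}

/-- tropical sum of finitely many elements of 𝕊. -/
noncomputable def sumFin : ∀ {n : ℕ}, (Fin n → STrop) → STrop
  | 0, _ => zero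
  | _ + 1, f => add (f 0) (sumFin fun i => f i.succ)

/-- matrix–vector product A ⊙ x over 𝕊. -/
noncomputable def mv {d n : ℕ} (A : Fin d → Fin n → STrop) (x : Fin n → STrop) : Fin d → STrop :=
  fun i => sumFin fun j => mul (A i j) (x j)

/-- vectors in 𝕋±^d. -/
def isSignedVec {d : ℕ} (v : Fin d → STrop) : Prop := ∀ i, isSigned (v i)

/-- the signed tropical convex hull of the columns of a matrix A:
tconv(A) = {z ∈ 𝕋±^d : z ⋈ A⊙x for some x ∈ 𝕋≥^n with ⊕_j x_j = 0}. -/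
def tconv {d n : ℕ} (A : Fin d → Fin n → STrop) : Set (Fin d → STrop) :=
  {z | isSignedVec z ∧ ∃ x : Fin n → STrop,
    (∀ j, nneg (x j)) ∧ sumFin x = one ∧ ∀ i, bal (z i) (mv A x i)}

/-- the signed tropical convex hull of an arbitrary set: the union of the hulls
of all finite collections of points of M. -/
def tconvSet {d : ℕ} (M : Set (Fin d → STrop)) : Set (Fin d → STrop) :=
  ⋃ (n : ℕ) (A : Fin d → Fin n → STrop) (_ : ∀ j, (fun i => A i j) ∈ M), tconv A

/-- a set M ⊆ 𝕋±^d is tropically convex iff M = tconv(M). -/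
def TropConvex {d : ℕ} (M : Set (Fin d → STrop)) : Prop := M = tconvSet M

/-- evaluation a ⊙ (0, x₁, …, x_d)ᵀ of an affine functional. -/
noncomputable def affEval {d : ℕ} (a : Fin (d + 1) → STrop) (x : Fin d → STrop) : STrop :=
  sumFin fun j => mul (a j) ((Fin.cons one x : Fin (d + 1) → STrop) j)

/-- the open signed tropical halfspace H⁺(a) = {x ∈ 𝕋±^d : a⊙(0,x)ᵀ > 𝟘}. -/
def Hopen {d : ℕ} (a : Fin (d + 1) → STrop) : Set (Fin d → STrop) :=
  {x | isSignedVec x ∧ sgt (affEval a x) zero}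

/-- the closed signed tropical halfspace H̄⁺(a) = {x ∈ 𝕋±^d : a⊙(0,x)ᵀ ⊵ 𝟘}. -/
def Hclosed {d : ℕ} (a : Fin (d + 1) → STrop) : Set (Fin d → STrop) :=
  {x | isSignedVec x ∧ teq (affEval a x) zero}

/-- the non-negative kernel nnker(A). -/
def nnker {d n : ℕ} (A : Fin d → Fin n → STrop) : Set (Fin n → STrop) :=
  {x | (∀ j, nneg (x j)) ∧ x ≠ (fun _ => zero) ∧ ∀ i, balZero (mv A x i)}

/-- the open tropical cone sep(A) = {y ∈ 𝕋±^d : yᵀ⊙A > 𝟘 componentwise}. -/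
def sep {d : ℕ} {J : Type} (A : Fin d → J → STrop) : Set (Fin d → STrop) :=
  {y | isSignedVec y ∧ ∀ j, isPos (sumFin fun i => mul (y i) (A i j))}

end STrop

/-- replace all balanced entries of a column by their positive (resp. negative)
signed resolution. -/
def STrop.resolve : Bool → STrop → STrop
  | b, STrop.elem SSign.bal r => STrop.elem (if b then SSign.pos else SSign.neg) r
  | _, x => x

namespace SepProof
open STrop SSign

def val : STrop → WithBot ℝ
  | STrop.zero => ⊥
  | STrop.elem _ r => (r : WithBot ℝ)

def isNeg : STrop → Prop
  | STrop.elem SSign.neg _ => True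
  | _ => False

def isBal : STrop → Prop
  | STrop.elem SSign.bal _ => True
  | _ => False

def Inv (x g h : STrop) : Prop :=
  val g = val x ∧ val h = val x ∧
  (isPos x → g = x ∧ h = x) ∧
  (isNeg x → g = x ∧ h = x) ∧
  (isBal x → ¬(isPos g ∧ isPos h))

lemma add_zero' (x : STrop) : add x STrop.zero = x := by cases x <;> rfl

lemma zero_add' (x : STrop) : add STrop.zero x = x := by cases x <;> rfl

lemma val_eq_coe {x : STrop} {r : ℝ} (h : val x = (r : WithBot ℝ)) :
    ∃ t, x = STrop.elem t r := by
  cases x with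
  | zero => simp [val] at h
  | elem s u =>
    refine ⟨s, ?_⟩
    simp only [val, WithBot.coe_inj] at h
    rw [h]

lemma val_eq_bot {x : STrop} (h : val x = ⊥) : x = STrop.zero := by
  cases x with
  | zero => rfl
  | elem s u => simp [val] at h

lemma add_of_lt {x y : STrop} (h : val y < val x) : add x y = x := by
  cases x with
  | zero => simp [val] at h
  | elem s r =>
    cases y with
    | zero => rfl
    | elem t u =>
      simp only [val, WithBot.coe_lt_coe] at h
      simp only [add]
      rw [if_neg (by linarith), if_pos h]

lemma add_of_lt' {x y : STrop} (h : val x < val y) : add x y = y := by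
  cases x with
  | zero => cases y <;> rfl
  | elem s r =>
    cases y with
    | zero => simp [val] at h
    | elem t u =>
      simp only [val, WithBot.coe_lt_coe] at h
      simp only [add]
      rw [if_pos h]

lemma add_of_eq (s t : SSign) (r : ℝ) :
    add (STrop.elem s r) (STrop.elem t r) =
      if s = t then STrop.elem s r else STrop.elem SSign.bal r := by
  simp [add]

lemma Inv_zero : Inv STrop.zero STrop.zero STrop.zero := by
  refine ⟨rfl, rfl, ?_, ?_, ?_⟩ <;> intro h <;> simp [isPos, isNeg, isBal] at h

lemma Inv_add {x₁ g₁ h₁ x₂ g₂ h₂ : STrop} (I₁ : Inv x₁ g₁ h₁) (I₂ : Inv x₂ g₂ h₂) :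
    Inv (add x₁ x₂) (add g₁ g₂) (add h₁ h₂) := by
  obtain ⟨vg₁, vh₁, P₁, N₁, B₁⟩ := I₁
  obtain ⟨vg₂, vh₂, P₂, N₂, B₂⟩ := I₂
  rcases lt_trichotomy (val x₁) (val x₂) with hlt | heq | hgt
  · rw [add_of_lt' hlt, add_of_lt' (by rw [vg₁, vg₂]; exact hlt),
      add_of_lt' (by rw [vh₁, vh₂]; exact hlt)]
    exact ⟨vg₂, vh₂, P₂, N₂, B₂⟩
  · cases x₁ with
    | zero =>
      have : x₂ = STrop.zero := val_eq_bot (by rw [← heq]; rfl)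
      subst this
      rw [val_eq_bot (vg₁.trans rfl), val_eq_bot (vh₁.trans rfl),
        val_eq_bot (vg₂.trans rfl), val_eq_bot (vh₂.trans rfl)]
      exact Inv_zero
    | elem s₁ r =>
      cases x₂ with
      | zero => simp [val] at heq
      | elem s₂ u =>
        have hru : r = u := by simpa [val] using heq
        subst hru
        obtain ⟨t₁, rfl⟩ := val_eq_coe vg₁
        obtain ⟨t₂, rfl⟩ := val_eq_coe vg₂
        obtain ⟨w₁, rfl⟩ := val_eq_coe vh₁
        obtain ⟨w₂, rfl⟩ := val_eq_coe vh₂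
        rw [add_of_eq, add_of_eq, add_of_eq]
        cases s₁ <;> cases s₂ <;>
          simp_all [Inv, isPos, isNeg, isBal, val] <;>
          (try cases t₁) <;> (try cases t₂) <;> (try cases w₁) <;> (try cases w₂) <;>
          simp (config := {decide := true}) [isPos, isNeg, isBal, val] at *
  · rw [add_of_lt hgt, add_of_lt (by rw [vg₁, vg₂]; exact hgt),
      add_of_lt (by rw [vh₁, vh₂]; exact hgt)]
    exact ⟨vg₁, vh₁, P₁, N₁, B₁⟩

lemma Inv_sum : ∀ {m : ℕ} (f g h : Fin m → STrop),
    (∀ i, Inv (f i) (g i) (h i)) → Inv (sumFin f) (sumFin g) (sumFin h)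
  | 0, f, g, h, _ => Inv_zero
  | m + 1, f, g, h, H =>
    Inv_add (H 0) (Inv_sum _ _ _ fun i => H i.succ)

lemma Inv_pos_iff {x g h : STrop} (I : Inv x g h) :
    isPos x ↔ (isPos g ∧ isPos h) := by
  obtain ⟨vg, vh, P, N, B⟩ := I
  constructor
  · intro hx
    obtain ⟨hg, hh⟩ := P hx
    rw [hg, hh]; exact ⟨hx, hx⟩
  · rintro ⟨hg, hh⟩
    cases x with
    | zero =>
      cases g with
      | zero => exact hg
      | elem t u => simp [val] at vg
    | elem s r =>
      cases s with
      | pos => trivial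
      | neg =>
        rw [(N trivial).1] at hg
        exact hg.elim
      | bal => exact absurd ⟨hg, hh⟩ (B trivial)

lemma Inv_base {y a : STrop} (hy : isSigned y) :
    Inv (mul y a) (mul y (STrop.resolve true a)) (mul y (STrop.resolve false a)) := by
  cases y with
  | zero => cases a with
    | zero => exact Inv_zero
    | elem t u => cases t <;> exact Inv_zero
  | elem s r =>
    cases a with
    | zero => cases s <;> exact Inv_zero
    | elem t u =>
      cases s <;> cases t <;>
        simp_all [Inv, isSigned, STrop.resolve, mul, signMul, val, isPos, isNeg, isBal]

end SepProof

/-- sep(A) = sep(ξ(A)), where ξ(A) replaces each column containing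
balanced entries by its two signed resolutions. -/
theorem sep_eq_sep_resolution (d n : ℕ) (A : Fin d → Fin n → STrop) :
    STrop.sep A =
      STrop.sep (fun i (p : Fin n × Bool) => STrop.resolve p.2 (A i p.1)) := by
  ext y
  simp only [STrop.sep, Set.mem_setOf_eq]
  constructor
  · rintro ⟨hy, hpos⟩
    refine ⟨hy, ?_⟩
    rintro ⟨j, b⟩
    have I := SepProof.Inv_sum (fun i => STrop.mul (y i) (A i j))
      (fun i => STrop.mul (y i) (STrop.resolve true (A i j)))
      (fun i => STrop.mul (y i) (STrop.resolve false (A i j)))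
      (fun i => SepProof.Inv_base (hy i))
    have h2 := (SepProof.Inv_pos_iff I).mp (hpos j)
    cases b
    · exact h2.2
    · exact h2.1
  · rintro ⟨hy, hpos⟩
    refine ⟨hy, fun j => ?_⟩
    have I := SepProof.Inv_sum (fun i => STrop.mul (y i) (A i j))
      (fun i => STrop.mul (y i) (STrop.resolve true (A i j)))
      (fun i => STrop.mul (y i) (STrop.resolve false (A i j)))
      (fun i => SepProof.Inv_base (hy i))
    exact (SepProof.Inv_pos_iff I).mpr ⟨hpos (j, true), hpos (j, false)⟩
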